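/- Let Φ : ℝⁿ → ℝ be a C³ convex function, let u be the unique global C² solution on [0,∞) × ℝⁿ of the multidimensional Burgers system ∂u/∂t + Σ_{j=1}^n u_j ∂u/∂x_j = 0 with u(0,x) = ∇Φ(x), and let U ∈ C³([0,∞) × ℝⁿ) be a potential with u_i = ∂U/∂x_i. Suppose moreover there exists δ > 0 such that Hess Φ(x) ≥ δ·I for all x ∈ ℝⁿ. Then for any fixed α ∈ ℝⁿ, along the characteristic curve x(t,α) = α + t∇Φ(α) one has |D²U(t, x(t,α))| ≤ C̃₁(1+t)^{-1} and |D³U(t, x(t,α))| ≤ C̃₂(1+t)^{-2} for all t ≥ 0, where C̃₁ and C̃₂ are constants independent of t but depending on δ and α. -/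

import Mathlib

/-!
The solution `u` is constant along each characteristic, so `∇U(t, x(t, β)) = ∇Φ(β)` for every `β`.
Differentiating this identity in `β` once and twice expresses `D²U` and `D³U` at `x(t, α)` through
the derivatives of `Φ` at `α` and the inverse of `∂x/∂β = I + t Hess Φ(α)`. Uniform convexity makes
this matrix coercive with constant `1 + tδ`, so its inverse is `O((1 + t)⁻¹)`, which gives the two
decay rates.
-/

/-- The gradient `∇Φ(x) = (∂Φ/∂x₁, …, ∂Φ/∂xₙ)(x)`. -/
noncomputable def gradFn {n : ℕ} (Φ : (Fin n → ℝ) → ℝ) (x : Fin n → ℝ) : Fin n → ℝ :=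
  fun i => fderiv ℝ Φ x (Pi.single i 1)

/-- The Hessian matrix `Hess Φ(x) = (∂²Φ/∂xᵢ∂xⱼ)(x)`. -/
noncomputable def hessMat {n : ℕ} (Φ : (Fin n → ℝ) → ℝ) (x : Fin n → ℝ) :
    Matrix (Fin n) (Fin n) ℝ :=
  Matrix.of fun i j => iteratedFDeriv ℝ 2 Φ x ![Pi.single i 1, Pi.single j 1]

/-- `u : ℝ → (Fin n → ℝ) → (Fin n → ℝ)` is a global `C^k` solution on `[0,∞) × ℝⁿ` of the
multidimensional Burgers system `∂u/∂t + ∑ⱼ uⱼ ∂u/∂xⱼ = 0` with initial data `φ`. -/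
def IsGlobalSolBurgers (n : ℕ) (φ : (Fin n → ℝ) → (Fin n → ℝ)) (k : ℕ∞)
    (u : ℝ → (Fin n → ℝ) → (Fin n → ℝ)) : Prop :=
  ContDiffOn ℝ k (fun p : ℝ × (Fin n → ℝ) => u p.1 p.2) (Set.Ici 0 ×ˢ Set.univ) ∧
  (∀ x, u 0 x = φ x) ∧
  ∀ t ∈ Set.Ici (0 : ℝ), ∀ x : Fin n → ℝ, ∀ i : Fin n,
    derivWithin (fun s => u s x i) (Set.Ici 0) t
      + ∑ j : Fin n, u t x j * fderiv ℝ (fun y => u t y i) x (Pi.single j 1) = 0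

open Set Function

section Transport

variable {E F G : Type*} [NormedAddCommGroup E] [NormedSpace ℝ E]
  [NormedAddCommGroup F] [NormedSpace ℝ F] [NormedAddCommGroup G] [NormedSpace ℝ G]

theorem ContinuousLinearMap.opNorm_le_mul_opNorm_comp_of_surjective (L : E →L[ℝ] F)
    {A : G →L[ℝ] E} (hA : Surjective A) {K : ℝ} (hK₀ : 0 ≤ K) (hK : ∀ v, ‖v‖ ≤ K * ‖A v‖) :
    ‖L‖ ≤ K * ‖L.comp A‖ := by
  refine L.opNorm_le_bound (by positivity) fun x => ?_
  obtain ⟨v, rfl⟩ := hA x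
  calc ‖L (A v)‖ = ‖L.comp A v‖ := rfl
    _ ≤ ‖L.comp A‖ * ‖v‖ := (L.comp A).le_opNorm v
    _ ≤ ‖L.comp A‖ * (K * ‖A v‖) := by gcongr; exact hK v
    _ = K * ‖L.comp A‖ * ‖A v‖ := by ring

theorem fderiv_fderiv_comp_apply {f : G → F} {χ : E → G} (hf : ContDiff ℝ 2 f)
    (hχ : ContDiff ℝ 2 χ) (x w : E) :
    fderiv ℝ (fderiv ℝ (f ∘ χ)) x w =
      (fderiv ℝ (fderiv ℝ f) (χ x) (fderiv ℝ χ x w)).comp (fderiv ℝ χ x) +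
        (fderiv ℝ f (χ x)).comp (fderiv ℝ (fderiv ℝ χ) x w) := by
  have hf₁ : Differentiable ℝ f := hf.differentiable (by norm_num)
  have hχ₁ : Differentiable ℝ χ := hχ.differentiable (by norm_num)
  have hf₂ : Differentiable ℝ (fderiv ℝ f) :=
    (hf.fderiv_right (m := 1) le_rfl).differentiable one_ne_zero
  have hχ₂ : Differentiable ℝ (fderiv ℝ χ) :=
    (hχ.fderiv_right (m := 1) le_rfl).differentiable one_ne_zero
  have hD : fderiv ℝ (f ∘ χ) = fun y => (fderiv ℝ f (χ y)).comp (fderiv ℝ χ y) :=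
    funext fun y => fderiv_comp y (hf₁ _) (hχ₁ y)
  have hcomp : HasFDerivAt (fun y => fderiv ℝ f (χ y)) ((fderiv ℝ (fderiv ℝ f) (χ x)).comp
      (fderiv ℝ χ x)) x := (hf₂ _).hasFDerivAt.comp x (hχ₁ x).hasFDerivAt
  rw [hD, (hcomp.clm_comp (hχ₂ x).hasFDerivAt).fderiv]
  simp [add_comm]

theorem ContinuousLinearMap.surjective_of_norm_le_mul_norm [FiniteDimensional ℝ E]
    (A : E →L[ℝ] E) {K : ℝ} (hK : ∀ v, ‖v‖ ≤ K * ‖A v‖) : Surjective A :=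
  LinearMap.injective_iff_surjective.1 <| (injective_iff_map_eq_zero A.toLinearMap).2
    fun v hv => by
      have hAv : A v = 0 := hv
      simpa [hAv] using hK v

theorem norm_iteratedFDeriv_two (f : E → F) (x : E) :
    ‖iteratedFDeriv ℝ 2 f x‖ = ‖fderiv ℝ (fderiv ℝ f) x‖ := by
  rw [← norm_iteratedFDeriv_fderiv, norm_iteratedFDeriv_one]

variable {f : G → F} {g : E → F} {χ : E → G} {x : E} {K : ℝ}

theorem norm_fderiv_le_of_comp_eq (hfg : f ∘ χ = g) (hf : DifferentiableAt ℝ f (χ x))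
    (hχ : DifferentiableAt ℝ χ x) (hA : Surjective (fderiv ℝ χ x)) (hK₀ : 0 ≤ K)
    (hK : ∀ v, ‖v‖ ≤ K * ‖fderiv ℝ χ x v‖) :
    ‖fderiv ℝ f (χ x)‖ ≤ K * ‖fderiv ℝ g x‖ := by
  rw [← hfg, fderiv_comp x hf hχ]
  exact (fderiv ℝ f (χ x)).opNorm_le_mul_opNorm_comp_of_surjective hA hK₀ hK

/-- Differentiating `f ∘ χ = g` twice gives
`D²f(χ x)(A w) ∘ A = D²g(x) w - Df(χ x) ∘ D²χ(x) w` with `A = Dχ(x)`; then invert `A` twice. -/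
theorem norm_fderiv_fderiv_le_of_comp_eq (hfg : f ∘ χ = g) (hf : ContDiff ℝ 2 f)
    (hχ : ContDiff ℝ 2 χ) (hA : Surjective (fderiv ℝ χ x)) (hK₀ : 0 ≤ K)
    (hK : ∀ v, ‖v‖ ≤ K * ‖fderiv ℝ χ x v‖) :
    ‖fderiv ℝ (fderiv ℝ f) (χ x)‖ ≤
      K * (K * (‖fderiv ℝ (fderiv ℝ g) x‖ +
        ‖fderiv ℝ f (χ x)‖ * ‖fderiv ℝ (fderiv ℝ χ) x‖)) := by
  set A := fderiv ℝ χ x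
  set D := fderiv ℝ (fderiv ℝ f) (χ x)
  have hcomp : ∀ w, ‖D (A w)‖ ≤
      K * (‖fderiv ℝ (fderiv ℝ g) x‖ + ‖fderiv ℝ f (χ x)‖ * ‖fderiv ℝ (fderiv ℝ χ) x‖) * ‖w‖ := by
    intro w
    have hchain := fderiv_fderiv_comp_apply hf hχ x w
    rw [hfg, eq_comm, ← eq_sub_iff_add_eq] at hchain
    refine ((D (A w)).opNorm_le_mul_opNorm_comp_of_surjective hA hK₀ hK).trans ?_
    rw [hchain, mul_assoc]
    gcongr
    calc _ ≤ ‖fderiv ℝ (fderiv ℝ g) x w‖ + ‖fderiv ℝ f (χ x)‖ * ‖fderiv ℝ (fderiv ℝ χ) x w‖ :=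
          (norm_sub_le _ _).trans (by gcongr; exact ContinuousLinearMap.opNorm_comp_le _ _)
      _ ≤ _ := by
          rw [add_mul, mul_assoc]
          gcongr <;> exact ContinuousLinearMap.le_opNorm _ _
  refine (D.opNorm_le_mul_opNorm_comp_of_surjective hA hK₀ hK).trans ?_
  gcongr
  exact (D.comp A).opNorm_le_bound (by positivity) fun w => by simpa [mul_assoc] using hcomp w

end Transport

section HalfSpace

variable {E F : Type*} [NormedAddCommGroup E] [NormedSpace ℝ E]
  [NormedAddCommGroup F] [NormedSpace ℝ F]
  {f : ℝ → E → F} {L : ℝ × E →L[ℝ] F} {s : ℝ}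

theorem HasFDerivWithinAt.hasFDerivAt_uncurry_right {x : E}
    (h : HasFDerivWithinAt (uncurry f) L (Ici 0 ×ˢ univ) (s, x)) (hs : 0 ≤ s) :
    HasFDerivAt (f s) (L.comp (.inr ℝ ℝ E)) x :=
  (h.comp x (hasFDerivAt_prodMk_right s x).hasFDerivWithinAt
    fun _ _ => ⟨hs, trivial⟩).hasFDerivAt_of_univ

theorem HasFDerivWithinAt.hasDerivWithinAt_uncurry_comp {c : ℝ → E} {c' : E}
    (h : HasFDerivWithinAt (uncurry f) L (Ici 0 ×ˢ univ) (s, c s)) (hc : HasDerivAt c c' s) :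
    HasDerivWithinAt (fun r => f r (c r)) (L (1, c')) (Ici 0) s :=
  h.comp_hasDerivWithinAt (x := s) (f := fun r => (r, c r))
    ((hasDerivAt_id s).prodMk hc).hasDerivWithinAt fun _ hr => ⟨hr, trivial⟩

theorem ContDiffOn.contDiff_of_uncurry {k : WithTop ℕ∞}
    (h : ContDiffOn ℝ k (uncurry f) (Ici 0 ×ˢ univ)) (hs : 0 ≤ s) : ContDiff ℝ k (f s) :=
  contDiffOn_univ.1 <| h.comp (contDiff_const.prodMk contDiff_id).contDiffOn
    fun _ _ => mk_mem_prod hs trivial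

end HalfSpace

theorem ContinuousLinearMap.apply_eq_sum_pi_single {n : ℕ} {F : Type*} [NormedAddCommGroup F]
    [NormedSpace ℝ F] (L : (Fin n → ℝ) →L[ℝ] F) (v : Fin n → ℝ) :
    L v = ∑ i, v i • L (Pi.single i 1) := by
  conv_lhs => rw [pi_eq_sum_univ' v]
  simp only [map_sum, map_smul]

-- `Fin n → ℝ` carries the sup norm; the factor `n` pays for comparing it with `∑ i, v i ^ 2`.
theorem norm_le_of_mul_sum_sq_le_sum_mul {n : ℕ} {c : ℝ} (hc : 0 < c) {v w : Fin n → ℝ}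
    (h : c * ∑ i, v i ^ 2 ≤ ∑ i, w i * v i) : ‖v‖ ≤ n / c * ‖w‖ := by
  have hS : 0 ≤ ∑ i, v i ^ 2 := by positivity
  have hsq : ‖v‖ ^ 2 ≤ ∑ i, v i ^ 2 := by
    refine (Real.le_sqrt (norm_nonneg v) hS).1 ((pi_norm_le_iff_of_nonneg (Real.sqrt_nonneg _)).2
      fun i => Real.abs_le_sqrt ?_)
    exact Finset.single_le_sum (f := fun i => v i ^ 2) (fun j _ => sq_nonneg (v j))
      (Finset.mem_univ i)
  have hsum : ∑ i, w i * v i ≤ n * (‖w‖ * ‖v‖) := by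
    calc ∑ i, w i * v i ≤ ∑ _i : Fin n, ‖w‖ * ‖v‖ := Finset.sum_le_sum fun i _ =>
          calc w i * v i ≤ ‖w i‖ * ‖v i‖ := by rw [← norm_mul]; exact Real.le_norm_self _
            _ ≤ ‖w‖ * ‖v‖ := mul_le_mul (norm_le_pi_norm w i) (norm_le_pi_norm v i)
              (norm_nonneg _) (norm_nonneg _)
      _ = n * (‖w‖ * ‖v‖) := by simp
  rw [div_mul_eq_mul_div, le_div_iff₀ hc]
  rcases (norm_nonneg v).eq_or_lt with hv | hv
  · rw [← hv, zero_mul]; positivity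
  · nlinarith

section Gradient

variable {n : ℕ} {Φ : (Fin n → ℝ) → ℝ}

theorem contDiff_gradFn {m : ℕ} (hΦ : ContDiff ℝ (m + 1) Φ) : ContDiff ℝ m (gradFn Φ) :=
  contDiff_pi.2 fun _ => (hΦ.fderiv_right le_rfl).clm_apply contDiff_const

theorem fderiv_gradFn_apply (hΦ : ContDiff ℝ 2 Φ) (x v : Fin n → ℝ) (i : Fin n) :
    fderiv ℝ (gradFn Φ) x v i = fderiv ℝ (fderiv ℝ Φ) x v (Pi.single i 1) := by
  have hd : DifferentiableAt ℝ (fderiv ℝ Φ) x :=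
    (hΦ.fderiv_right (m := 1) le_rfl).differentiable one_ne_zero x
  have hcoord : ∀ j, HasFDerivAt (fun y => gradFn Φ y j)
      ((fderiv ℝ (fderiv ℝ Φ) x).flip (Pi.single j 1)) x := fun j => by
    have h := hd.hasFDerivAt.clm_apply (hasFDerivAt_const (Pi.single j (1 : ℝ)) x)
    rwa [ContinuousLinearMap.comp_zero, zero_add] at h
  rw [show fderiv ℝ (gradFn Φ) x = _ from (hasFDerivAt_pi.2 hcoord).fderiv]
  rfl

theorem sum_fderiv_gradFn_mul_self (hΦ : ContDiff ℝ 2 Φ) (x v : Fin n → ℝ) :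
    ∑ i, fderiv ℝ (gradFn Φ) x v i * v i = ∑ i, ∑ j, hessMat Φ x i j * v i * v j := by
  set D := fderiv ℝ (fderiv ℝ Φ) x
  have hlhs : ∑ i, fderiv ℝ (gradFn Φ) x v i * v i = D v v := by
    rw [(D v).apply_eq_sum_pi_single v]
    simp [fderiv_gradFn_apply hΦ, mul_comm, D]
  have hrhs : ∑ i, ∑ j, hessMat Φ x i j * v i * v j = D v v := by
    rw [D.apply_eq_sum_pi_single v]
    simp [hessMat, iteratedFDeriv_two_apply, (D _).apply_eq_sum_pi_single v, Finset.mul_sum, D]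
    exact Finset.sum_congr rfl fun i _ => Finset.sum_congr rfl fun j _ => by ring
  rw [hlhs, hrhs]

end Gradient

section Characteristics

variable {n : ℕ} {Φ : (Fin n → ℝ) → ℝ} {t : ℝ}

noncomputable def charMap (Φ : (Fin n → ℝ) → ℝ) (t : ℝ) (β : Fin n → ℝ) : Fin n → ℝ :=
  β + t • gradFn Φ β

theorem contDiff_charMap (hΦ : ContDiff ℝ 3 Φ) (t : ℝ) : ContDiff ℝ 2 (charMap Φ t) :=
  contDiff_id.add ((contDiff_gradFn (m := 2) hΦ).const_smul t)

theorem fderiv_charMap (hΦ : ContDiff ℝ 2 Φ) (x : Fin n → ℝ) :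
    fderiv ℝ (charMap Φ t) x = .id ℝ _ + t • fderiv ℝ (gradFn Φ) x :=
  ((hasFDerivAt_id x).add
    (((contDiff_gradFn (m := 1) hΦ).differentiable one_ne_zero x).hasFDerivAt.const_smul t)).fderiv

theorem fderiv_fderiv_charMap (hΦ : ContDiff ℝ 3 Φ) (x : Fin n → ℝ) :
    fderiv ℝ (fderiv ℝ (charMap Φ t)) x = t • fderiv ℝ (fderiv ℝ (gradFn Φ)) x := by
  rw [funext (fderiv_charMap (hΦ.of_le (by norm_num))), fderiv_const_add]
  exact fderiv_fun_const_smul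
    (((contDiff_gradFn (m := 2) hΦ).fderiv_right (m := 1) le_rfl).differentiable one_ne_zero x) t

theorem norm_le_mul_norm_fderiv_charMap (hΦ : ContDiff ℝ 2 Φ) {δ : ℝ} (hδ : 0 ≤ δ) (ht : 0 ≤ t)
    {x : Fin n → ℝ}
    (hx : ∀ v : Fin n → ℝ, δ * ∑ i, v i ^ 2 ≤ ∑ i, ∑ j, hessMat Φ x i j * v i * v j)
    (v : Fin n → ℝ) : ‖v‖ ≤ n / (1 + t * δ) * ‖fderiv ℝ (charMap Φ t) x v‖ := by
  refine norm_le_of_mul_sum_sq_le_sum_mul (by positivity) ?_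
  have hquad := sum_fderiv_gradFn_mul_self hΦ x v
  have hconv : t * (δ * ∑ i, v i ^ 2) ≤ t * ∑ i, fderiv ℝ (gradFn Φ) x v i * v i :=
    mul_le_mul_of_nonneg_left (hquad ▸ hx v) ht
  simp only [fderiv_charMap hΦ, add_apply, smul_apply,
    ContinuousLinearMap.id_apply, Pi.add_apply, Pi.smul_apply, smul_eq_mul, add_mul,
    Finset.sum_add_distrib, mul_assoc, ← Finset.mul_sum, sq]
  simp only [sq] at hconv
  linarith

end Characteristics

namespace IsGlobalSolBurgers

variable {n : ℕ} {φ : (Fin n → ℝ) → (Fin n → ℝ)} {k : ℕ∞} {u : ℝ → (Fin n → ℝ) → (Fin n → ℝ)}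

theorem hasFDerivWithinAt (hu : IsGlobalSolBurgers n φ k u) (hk : 1 ≤ k) {s : ℝ} (hs : 0 ≤ s)
    (x : Fin n → ℝ) :
    HasFDerivWithinAt (uncurry u) (fderivWithin ℝ (uncurry u) (Ici 0 ×ˢ univ) (s, x))
      (Ici 0 ×ˢ univ) (s, x) :=
  (hu.1.differentiableOn (mod_cast (zero_lt_one.trans_le hk).ne') _
    (mk_mem_prod hs trivial)).hasFDerivWithinAt

/-- The Burgers system, written invariantly. -/
theorem fderivWithin_apply_one_self (hu : IsGlobalSolBurgers n φ k u) (hk : 1 ≤ k) {s : ℝ}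
    (hs : 0 ≤ s) (x : Fin n → ℝ) :
    fderivWithin ℝ (uncurry u) (Ici 0 ×ˢ univ) (s, x) (1, u s x) = 0 := by
  set D := fderivWithin ℝ (uncurry u) (Ici 0 ×ˢ univ) (s, x)
  have hD := hu.hasFDerivWithinAt hk hs x
  have htime : HasDerivWithinAt (fun r => u r x) (D (1, 0)) (Ici 0) s :=
    hD.hasDerivWithinAt_uncurry_comp (c := fun _ => x) (hasDerivAt_const s x)
  have hspace := hD.hasFDerivAt_uncurry_right hs
  funext i
  have htime_i : HasDerivWithinAt (fun r => u r x i) (D (1, 0) i) (Ici 0) s :=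
    hasDerivWithinAt_pi.1 htime i
  have hspace_i : HasFDerivAt (fun y => u s y i) ((ContinuousLinearMap.proj i).comp
      (D.comp (.inr ℝ ℝ (Fin n → ℝ)))) x :=
    hasFDerivAt_pi'.1 hspace i
  have hpde := hu.2.2 s hs x i
  rw [htime_i.derivWithin (uniqueDiffOn_Ici 0 s hs), hspace_i.fderiv] at hpde
  have hsplit : ((1 : ℝ), u s x) =
      (1, 0) + ∑ j, u s x j • ((0 : ℝ), (Pi.single j 1 : Fin n → ℝ)) := by
    ext <;> simp [Prod.fst_sum, Prod.snd_sum, ← pi_eq_sum_univ']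
  rw [hsplit, map_add, map_sum]
  simp only [map_smul, Pi.add_apply, Finset.sum_apply, Pi.smul_apply, smul_eq_mul, Pi.zero_apply]
  simpa [mul_comm] using hpde

/-- The defect `g s = u s (β + s • φ β) - φ β` solves the linear equation `g' = -D(s)(0, g)`
with `g 0 = 0`, so it vanishes by Grönwall. -/
theorem apply_add_smul_self (hu : IsGlobalSolBurgers n φ k u) (hk : 1 ≤ k) {t : ℝ} (ht : 0 ≤ t)
    (β : Fin n → ℝ) : u t (β + t • φ β) = φ β := by
  set γ : ℝ → (Fin n → ℝ) := fun s => β + s • φ β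
  set g : ℝ → (Fin n → ℝ) := fun s => u s (γ s) - φ β
  set D : ℝ → (ℝ × (Fin n → ℝ) →L[ℝ] (Fin n → ℝ)) :=
    fun s => fderivWithin ℝ (uncurry u) (Ici 0 ×ˢ univ) (s, γ s)
  have hγ : Continuous fun s => (s, γ s) := by fun_prop
  have hmaps : MapsTo (fun s => (s, γ s)) (Icc 0 t) (Ici 0 ×ˢ univ) :=
    fun s hs => mk_mem_prod hs.1 trivial
  have hg' : ∀ s, 0 ≤ s → HasDerivWithinAt g (-D s (0, g s)) (Ici 0) s := by
    intro s hs
    have hdir : ((1 : ℝ), φ β) = (1, u s (γ s)) - (0, g s) := by ext <;> simp [g]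
    have hcurve := (hu.hasFDerivWithinAt hk hs (γ s)).hasDerivWithinAt_uncurry_comp
      (((hasDerivAt_id s).smul_const (φ β)).const_add β)
    rw [one_smul, hdir, map_sub, hu.fderivWithin_apply_one_self hk hs, zero_sub] at hcurve
    exact hcurve.sub_const (φ β)
  obtain ⟨C, hC⟩ := isCompact_Icc.exists_bound_of_continuousOn
    ((hu.1.continuousOn_fderivWithin ((uniqueDiffOn_Ici 0).prod uniqueDiffOn_univ)
      (mod_cast hk)).comp hγ.continuousOn hmaps)
  have hbound : ∀ s ∈ Ico 0 t, ‖-D s (0, g s)‖ ≤ C * ‖g s‖ := fun s hs =>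
    calc ‖-D s (0, g s)‖ ≤ ‖D s‖ * ‖((0 : ℝ), g s)‖ := by
          rw [norm_neg]; exact (D s).le_opNorm _
      _ ≤ C * ‖g s‖ := by
          rw [Prod.norm_mk, norm_zero, max_eq_right (norm_nonneg _)]
          exact mul_le_mul_of_nonneg_right (hC s (Ico_subset_Icc_self hs)) (norm_nonneg _)
  have hgcont : ContinuousOn g (Icc 0 t) :=
    (hu.1.continuousOn.comp hγ.continuousOn hmaps).sub continuousOn_const
  have hg0 : g 0 = 0 := by simp [g, γ, hu.2.1]
  exact sub_eq_zero.1 <| eq_zero_of_abs_deriv_le_mul_abs_self_of_eq_zero_right hgcont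
    (fun s hs => (hg' s hs.1).mono (Ici_subset_Ici.2 hs.1)) hg0 hbound t ⟨ht, le_rfl⟩

theorem fderiv_comp_charMap {Φ V : (Fin n → ℝ) → ℝ} {t : ℝ}
    (hu : IsGlobalSolBurgers n (gradFn Φ) k u) (hk : 1 ≤ k)
    (hpot : ∀ x i, u t x i = fderiv ℝ V x (Pi.single i 1)) (ht : 0 ≤ t) :
    fderiv ℝ V ∘ charMap Φ t = fderiv ℝ Φ := by
  refine funext fun β => ContinuousLinearMap.ext fun v => ?_
  rw [comp_apply, ContinuousLinearMap.apply_eq_sum_pi_single, (fderiv ℝ Φ β).apply_eq_sum_pi_single]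
  simp only [← hpot, charMap, hu.apply_add_smul_self hk ht β]
  rfl

end IsGlobalSolBurgers

section Potential

variable {n : ℕ} {Φ V : (Fin n → ℝ) → ℝ} {t δ : ℝ} {α : Fin n → ℝ}

theorem norm_iteratedFDeriv_two_le_of_comp_charMap (hV : ContDiff ℝ 2 V) (hΦ : ContDiff ℝ 2 Φ)
    (hVΦ : fderiv ℝ V ∘ charMap Φ t = fderiv ℝ Φ) (hδ : 0 ≤ δ) (ht : 0 ≤ t)
    (hα : ∀ v : Fin n → ℝ, δ * ∑ i, v i ^ 2 ≤ ∑ i, ∑ j, hessMat Φ α i j * v i * v j) :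
    ‖iteratedFDeriv ℝ 2 V (charMap Φ t α)‖ ≤ n / (1 + t * δ) * ‖iteratedFDeriv ℝ 2 Φ α‖ := by
  have hK := norm_le_mul_norm_fderiv_charMap hΦ hδ ht hα
  rw [norm_iteratedFDeriv_two, norm_iteratedFDeriv_two]
  exact norm_fderiv_le_of_comp_eq hVΦ
    ((hV.fderiv_right (m := 1) le_rfl).differentiable one_ne_zero _)
    (differentiableAt_id.add
      (((contDiff_gradFn (m := 1) hΦ).differentiable one_ne_zero α).const_smul t))
    ((fderiv ℝ (charMap Φ t) α).surjective_of_norm_le_mul_norm hK) (by positivity) hK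

theorem norm_iteratedFDeriv_three_le_of_comp_charMap (hV : ContDiff ℝ 3 V) (hΦ : ContDiff ℝ 3 Φ)
    (hVΦ : fderiv ℝ V ∘ charMap Φ t = fderiv ℝ Φ) (hδ : 0 < δ) (ht : 0 ≤ t)
    (hα : ∀ v : Fin n → ℝ, δ * ∑ i, v i ^ 2 ≤ ∑ i, ∑ j, hessMat Φ α i j * v i * v j) :
    ‖iteratedFDeriv ℝ 3 V (charMap Φ t α)‖ ≤
      (n / (1 + t * δ)) ^ 2 * (‖iteratedFDeriv ℝ 3 Φ α‖ +
        n / δ * ‖iteratedFDeriv ℝ 2 Φ α‖ * ‖iteratedFDeriv ℝ 2 (gradFn Φ) α‖) := by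
  have hK := norm_le_mul_norm_fderiv_charMap (hΦ.of_le (by norm_num)) hδ.le ht hα
  have h₃ := norm_fderiv_fderiv_le_of_comp_eq hVΦ (hV.fderiv_right le_rfl) (contDiff_charMap hΦ t)
    ((fderiv ℝ (charMap Φ t) α).surjective_of_norm_le_mul_norm hK) (by positivity) hK
  rw [fderiv_fderiv_charMap hΦ, norm_smul, Real.norm_of_nonneg ht,
    ← norm_iteratedFDeriv_two (fderiv ℝ V), ← norm_iteratedFDeriv_two (fderiv ℝ Φ),
    ← norm_iteratedFDeriv_two V, ← norm_iteratedFDeriv_two (gradFn Φ),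
    norm_iteratedFDeriv_fderiv, norm_iteratedFDeriv_fderiv] at h₃
  have h₂ := norm_iteratedFDeriv_two_le_of_comp_charMap (hV.of_le (by norm_num))
    (hΦ.of_le (by norm_num)) hVΦ hδ.le ht hα
  have ht_div : n / (1 + t * δ) * t ≤ n / δ := by
    rw [div_mul_eq_mul_div, div_le_div_iff₀ (by positivity) hδ]
    nlinarith [Nat.cast_nonneg (α := ℝ) n]
  refine h₃.trans ?_
  rw [sq, mul_assoc]
  gcongr _ * (_ * (_ + ?_))
  calc _ ≤ n / (1 + t * δ) * ‖iteratedFDeriv ℝ 2 Φ α‖ *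
        (t * ‖iteratedFDeriv ℝ 2 (gradFn Φ) α‖) := by gcongr
    _ = n / (1 + t * δ) * t * ‖iteratedFDeriv ℝ 2 Φ α‖ *
        ‖iteratedFDeriv ℝ 2 (gradFn Φ) α‖ := by ring
    _ ≤ _ := by gcongr

end Potential

theorem inv_one_add_mul_le_max_mul_inv {δ t : ℝ} (hδ : 0 < δ) (ht : 0 ≤ t) :
    (1 + t * δ)⁻¹ ≤ max 1 δ⁻¹ * (1 + t)⁻¹ := by
  rw [← div_eq_mul_inv, le_div_iff₀ (by positivity), ← div_eq_inv_mul, div_le_iff₀ (by positivity)]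
  have h₁ : 1 ≤ max 1 δ⁻¹ := le_max_left _ _
  have h₂ : δ⁻¹ * (t * δ) ≤ max 1 δ⁻¹ * (t * δ) := by gcongr; exact le_max_right _ _
  rw [mul_comm t, ← mul_assoc, inv_mul_cancel₀ hδ.ne', one_mul] at h₂
  nlinarith

theorem burgers_potential_decay_along_characteristics_general
    (n : ℕ) (Φ : (Fin n → ℝ) → ℝ) (hΦ : ContDiff ℝ 3 Φ)
    (u : ℝ → (Fin n → ℝ) → (Fin n → ℝ))
    (hu : IsGlobalSolBurgers n (gradFn Φ) 2 u)
    (U : ℝ → (Fin n → ℝ) → ℝ)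
    (hU : ContDiffOn ℝ 3 (fun p : ℝ × (Fin n → ℝ) => U p.1 p.2) (Set.Ici 0 ×ˢ Set.univ))
    (hpot : ∀ t ∈ Set.Ici (0 : ℝ), ∀ x : Fin n → ℝ, ∀ i : Fin n,
      u t x i = fderiv ℝ (U t) x (Pi.single i 1))
    (δ : ℝ) (hδ : 0 < δ)
    (hstrict : ∀ x : Fin n → ℝ, ∀ v : Fin n → ℝ,
      δ * ∑ i, v i ^ 2 ≤ ∑ i, ∑ j, hessMat Φ x i j * v i * v j) :
    ∀ α : Fin n → ℝ, ∃ C₁ > (0:ℝ), ∃ C₂ > (0:ℝ),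
      ∀ t ∈ Set.Ici (0 : ℝ),
        ‖iteratedFDeriv ℝ 2 (U t) (α + t • gradFn Φ α)‖ ≤ C₁ * (1 + t)⁻¹ ∧
        ‖iteratedFDeriv ℝ 3 (U t) (α + t • gradFn Φ α)‖ ≤ C₂ * ((1 + t) ^ 2)⁻¹ := by
  intro α
  set M := max 1 δ⁻¹
  set c₂ := ‖iteratedFDeriv ℝ 2 Φ α‖
  set c₃ := ‖iteratedFDeriv ℝ 3 Φ α‖ + n / δ * c₂ * ‖iteratedFDeriv ℝ 2 (gradFn Φ) α‖
  have hM : 0 ≤ M := zero_le_one.trans (le_max_left _ _)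
  have hc₂ : 0 ≤ c₂ := norm_nonneg _
  have hc₃ : 0 ≤ c₃ := by positivity
  refine ⟨n * M * c₂ + 1, by positivity, (n * M) ^ 2 * c₃ + 1, by positivity,
    fun t (ht : 0 ≤ t) => ?_⟩
  have hV : ContDiff ℝ 3 (U t) := hU.contDiff_of_uncurry (f := U) ht
  have hVΦ := hu.fderiv_comp_charMap (by norm_num) (hpot t ht) ht
  have hdecay : n / (1 + t * δ) ≤ n * M * (1 + t)⁻¹ := by
    rw [div_eq_mul_inv, mul_assoc]
    gcongr
    exact inv_one_add_mul_le_max_mul_inv hδ ht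
  constructor
  · calc _ ≤ n / (1 + t * δ) * c₂ :=
          norm_iteratedFDeriv_two_le_of_comp_charMap (hV.of_le (by norm_num))
            (hΦ.of_le (by norm_num)) hVΦ hδ.le ht (hstrict α)
      _ ≤ n * M * c₂ * (1 + t)⁻¹ := by rw [mul_right_comm]; gcongr
      _ ≤ _ := by gcongr; linarith
  · calc _ ≤ (n / (1 + t * δ)) ^ 2 * c₃ :=
          norm_iteratedFDeriv_three_le_of_comp_charMap hV hΦ hVΦ hδ ht (hstrict α)
      _ ≤ (n * M * (1 + t)⁻¹) ^ 2 * c₃ := by gcongr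
      _ = (n * M) ^ 2 * c₃ * ((1 + t) ^ 2)⁻¹ := by rw [← inv_pow]; ring
      _ ≤ _ := by gcongr; linarith

/-- under uniform convexity `Hess Φ ≥ δ·I`, along each characteristic curve
`x(t,α) = α + t∇Φ(α)` the second and third spatial derivatives of the potential `U` decay
like `(1+t)⁻¹` and `(1+t)⁻²` respectively. -/
theorem burgers_potential_decay_along_characteristics
    (n : ℕ) (Φ : (Fin n → ℝ) → ℝ) (hΦ : ContDiff ℝ 3 Φ)
    (hconvex : ∀ x : Fin n → ℝ, (hessMat Φ x).PosSemidef)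
    (u : ℝ → (Fin n → ℝ) → (Fin n → ℝ))
    (hu : IsGlobalSolBurgers n (gradFn Φ) 2 u)
    (U : ℝ → (Fin n → ℝ) → ℝ)
    (hU : ContDiffOn ℝ 3 (fun p : ℝ × (Fin n → ℝ) => U p.1 p.2) (Set.Ici 0 ×ˢ Set.univ))
    (hpot : ∀ t ∈ Set.Ici (0 : ℝ), ∀ x : Fin n → ℝ, ∀ i : Fin n,
      u t x i = fderiv ℝ (U t) x (Pi.single i 1))
    (δ : ℝ) (hδ : 0 < δ)
    (hstrict : ∀ x : Fin n → ℝ, ∀ v : Fin n → ℝ,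
      δ * ∑ i, v i ^ 2 ≤ ∑ i, ∑ j, hessMat Φ x i j * v i * v j) :
    ∀ α : Fin n → ℝ, ∃ C₁ > (0:ℝ), ∃ C₂ > (0:ℝ),
      ∀ t ∈ Set.Ici (0 : ℝ),
        ‖iteratedFDeriv ℝ 2 (U t) (α + t • gradFn Φ α)‖ ≤ C₁ * (1 + t)⁻¹ ∧
        ‖iteratedFDeriv ℝ 3 (U t) (α + t • gradFn Φ α)‖ ≤ C₂ * ((1 + t) ^ 2)⁻¹ :=
  burgers_potential_decay_along_characteristics_general n Φ hΦ u hu U hU hpot δ hδ hstrict
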